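/- For 1 < s < 2 there exists a constant c > 0 such that for all x₁, x₂ ∈ ℝ^N with (|x₁|,|x₂|) ≠ (0,0): (|x₂|^{s-2}x₂ - |x₁|^{s-2}x₁)·(x₂ - x₁) ≥ c (|x₂| + |x₁|)^{s-2} |x₂ - x₁|². -/

import Mathlib

/-!
Write `a = ‖x₁‖`, `b = ‖x₂‖`, `t = ⟪x₁, x₂⟫` and `p = s - 1 ∈ (0, 1)`. Both sides of the
inequality are affine in `t`, which ranges over `[-ab, ab]`, so it suffices to treat collinear
vectors, `t = ±ab`, with `c = p`. For `t = ab` the claim follows from the tangent-line inequality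
`b ^ p - a ^ p ≥ p b ^ (p - 1) (b - a)` of the concave function `r ↦ r ^ p`, and for `t = -ab`
from its subadditivity `(a + b) ^ p ≤ a ^ p + b ^ p`.
-/

open RealInnerProductSpace Real

lemma mul_rpow_sub_one_mul_sub_le_rpow_sub_rpow {p a b : ℝ} (hp0 : 0 ≤ p) (hp1 : p ≤ 1)
    (ha : 0 ≤ a) (hab : a ≤ b) : p * b ^ (p - 1) * (b - a) ≤ b ^ p - a ^ p := by
  rcases (ha.trans hab).eq_or_lt with rfl | hb
  · simp [le_antisymm hab ha]
  have bernoulli := rpow_one_add_le_one_add_mul_self (s := a / b - 1)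
    (by linarith [div_nonneg ha hb.le]) hp0 hp1
  rw [add_sub_cancel, div_rpow ha hb.le, div_le_iff₀ (rpow_pos_of_pos hb p)] at bernoulli
  have hexpand : (1 + p * (a / b - 1)) * b ^ p = b ^ p - p * (b ^ p / b) * (b - a) := by
    field_simp
    ring
  rw [rpow_sub_one hb.ne']
  linarith

lemma mul_rpow_add_sub_one_mul_sub_le_rpow_sub_rpow {p a b : ℝ} (hp0 : 0 ≤ p) (hp1 : p ≤ 1)
    (ha : 0 ≤ a) (hab : a ≤ b) : p * (a + b) ^ (p - 1) * (b - a) ≤ b ^ p - a ^ p := by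
  rcases (ha.trans hab).eq_or_lt with rfl | hb
  · simp [le_antisymm hab ha]
  have hmono : (a + b) ^ (p - 1) ≤ b ^ (p - 1) :=
    rpow_le_rpow_of_nonpos hb (by linarith) (by linarith)
  calc p * (a + b) ^ (p - 1) * (b - a) ≤ p * b ^ (p - 1) * (b - a) := by
        gcongr
    _ ≤ b ^ p - a ^ p := mul_rpow_sub_one_mul_sub_le_rpow_sub_rpow hp0 hp1 ha hab

lemma mul_le_of_abs_le {p q r t : ℝ} (ht : |t| ≤ r) (h₁ : q * r ≤ p) (h₂ : -(q * r) ≤ p) :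
    q * t ≤ p :=
  calc q * t ≤ |q| * |t| := (le_abs_self _).trans (abs_mul q t).le
    _ ≤ |q| * r := by gcongr
    _ = |q * r| := by rw [abs_mul, abs_of_nonneg ((abs_nonneg t).trans ht)]
    _ ≤ p := abs_le'.mpr ⟨h₁, h₂⟩

lemma mul_rpow_add_mul_le_of_abs_le {p a b t : ℝ} (hp0 : 0 < p) (hp1 : p ≤ 1)
    (ha : 0 ≤ a) (hb : 0 ≤ b) (ht : |t| ≤ a * b) :
    p * (a + b) ^ (p - 1) * (a ^ 2 + b ^ 2 - 2 * t)
      ≤ a ^ (p - 1) * a ^ 2 + b ^ (p - 1) * b ^ 2 - (a ^ (p - 1) + b ^ (p - 1)) * t := by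
  have hpow {x : ℝ} (hx : 0 ≤ x) : x ^ (p - 1) * x = x ^ p := by
    rw [← rpow_add_one' hx (by linarith), sub_add_cancel]
  have collinear : p * (a + b) ^ (p - 1) * (b - a) ^ 2 ≤ (b ^ p - a ^ p) * (b - a) := by
    rcases le_total a b with hab | hba
    · linear_combination mul_le_mul_of_nonneg_right
        (mul_rpow_add_sub_one_mul_sub_le_rpow_sub_rpow hp0.le hp1 ha hab) (sub_nonneg.mpr hab)
    · rw [add_comm a b]
      linear_combination mul_le_mul_of_nonneg_right
        (mul_rpow_add_sub_one_mul_sub_le_rpow_sub_rpow hp0.le hp1 hb hba) (sub_nonneg.mpr hba)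
  have antipodal : p * (a + b) ^ p ≤ a ^ p + b ^ p :=
    calc p * (a + b) ^ p ≤ (a + b) ^ p :=
          mul_le_of_le_one_left (rpow_nonneg (add_nonneg ha hb) p) hp1
      _ ≤ a ^ p + b ^ p := rpow_add_le_add_rpow ha hb hp0.le hp1
  rw [← hpow ha, ← hpow hb] at collinear antipodal
  rw [← hpow (add_nonneg ha hb)] at antipodal
  suffices (a ^ (p - 1) + b ^ (p - 1) - 2 * p * (a + b) ^ (p - 1)) * t ≤
      a ^ (p - 1) * a ^ 2 + b ^ (p - 1) * b ^ 2 - p * (a + b) ^ (p - 1) * (a ^ 2 + b ^ 2) by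
    linarith
  apply mul_le_of_abs_le ht
  · linear_combination collinear
  · linear_combination mul_le_mul_of_nonneg_right antipodal (add_nonneg ha hb)

lemma inner_norm_rpow_smul_sub_ge {E : Type*} [NormedAddCommGroup E] [InnerProductSpace ℝ E]
    {s : ℝ} (hs1 : 1 < s) (hs2 : s ≤ 2) (x y : E) :
    ⟪‖y‖ ^ (s - 2) • y - ‖x‖ ^ (s - 2) • x, y - x⟫
      ≥ (s - 1) * (‖y‖ + ‖x‖) ^ (s - 2) * ‖y - x‖ ^ 2 := by
  have key := mul_rpow_add_mul_le_of_abs_le (p := s - 1) (by linarith) (by linarith)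
    (norm_nonneg x) (norm_nonneg y) (abs_real_inner_le_norm x y)
  rw [sub_sub, one_add_one_eq_two] at key
  have hinner : ⟪‖y‖ ^ (s - 2) • y - ‖x‖ ^ (s - 2) • x, y - x⟫ = ‖x‖ ^ (s - 2) * ‖x‖ ^ 2
      + ‖y‖ ^ (s - 2) * ‖y‖ ^ 2 - (‖x‖ ^ (s - 2) + ‖y‖ ^ (s - 2)) * ⟪x, y⟫ := by
    simp only [inner_sub_left, inner_sub_right, real_inner_smul_left, real_inner_self_eq_norm_sq,
      real_inner_comm x y]
    ring
  rw [hinner, norm_sub_sq_real, add_comm ‖y‖, real_inner_comm x y]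
  linarith

theorem vector_inequality_s_lt_two (N : ℕ) (s : ℝ) (hs1 : 1 < s) (hs2 : s < 2) :
    ∃ c > (0 : ℝ), ∀ x₁ x₂ : EuclideanSpace ℝ (Fin N), ¬(x₁ = 0 ∧ x₂ = 0) →
      ⟪‖x₂‖ ^ (s - 2) • x₂ - ‖x₁‖ ^ (s - 2) • x₁, x₂ - x₁⟫
        ≥ c * (‖x₂‖ + ‖x₁‖) ^ (s - 2) * ‖x₂ - x₁‖ ^ 2 :=
  ⟨s - 1, by linarith, fun x₁ x₂ _ => inner_norm_rpow_smul_sub_ge hs1 hs2.le x₁ x₂⟩
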